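/- arXiv:1108.1766 — 6 statements merged into one kernel-verified Lean document; each statement's English description precedes it below -/
import Mathlib

section
/- Let X = [0,1] with P the uniform (Lebesgue) distribution and C the class of interval classifiers h_{[a,b]} (value +1 on [a,b] ⊂ (0,1), −1 elsewhere). Fix a ∈ (0,1), f = h_{[a,a]}, and r ∈ (0,1). Then the set of pairs shattered by B(f,r) is exactly {(x_1,x_2) ∈ (0,1)² : 0 < |x_1 − x_2| ≤ r}, and its two-dimensional Lebesgue measure equals (2−r)·r. Consequently the order-2 disagreement coefficient θ_f^{(2)}(ε) = max{1, sup_{r>ε} P²(S ∈ X² : B(f,r) shatters S)/r} equals 2 − ε for ε ∈ (0,1). -/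
open MeasureTheory Set

noncomputable section

/-- The interval classifier `h_{[a,b]}`: label `+1` (here `true`) iff `x ∈ [a,b]`. -/
def ival (a b : ℝ) : ℝ → Bool := fun x => decide (a ≤ x ∧ x ≤ b)

/-- The uniform distribution on `[0,1]`. -/
def Pm : Measure ℝ := volume.restrict (Icc 0 1)

/-- The class of interval classifiers `h_{[a,b]}` with `0 < a ≤ b < 1`. -/
def Cls : Set (ℝ → Bool) :=
  {h | ∃ a b : ℝ, 0 < a ∧ a ≤ b ∧ b < 1 ∧ h = ival a b}

/-- The ball of radius `r` around `f` in `Cls`, in the pseudometric induced by `Pm`. -/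
def ballP (f : ℝ → Bool) (r : ℝ) : Set (ℝ → Bool) :=
  {h ∈ Cls | Pm {x | h x ≠ f x} ≤ ENNReal.ofReal r}

/-- A pair `(x₁, x₂)` is shattered by `H` if all four labelings of the pair are
realized by elements of `H`. -/
def Shatters2 (H : Set (ℝ → Bool)) (x₁ x₂ : ℝ) : Prop :=
  ∀ y₁ y₂ : Bool, ∃ h ∈ H, h x₁ = y₁ ∧ h x₂ = y₂

/-- The order-2 disagreement coefficient
`θ_f^{(2)}(ε) = max{1, sup_{r>ε} P²(S : B(f,r) shatters S)/r}`. -/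
def theta2 (f : ℝ → Bool) (ε : ℝ) : ℝ :=
  max 1 (⨆ r ∈ Ioi ε,
    ((Pm.prod Pm) {p : ℝ × ℝ | Shatters2 (ballP f r) p.1 p.2}).toReal / r)


lemma ival_true {c d x : ℝ} : ival c d x = true ↔ c ≤ x ∧ x ≤ d := by
  simp [ival]

lemma ival_false {c d x : ℝ} : ival c d x = false ↔ ¬ (c ≤ x ∧ x ≤ d) := by
  simp [ival]

lemma pm_disagree (a c d : ℝ) (h0 : 0 < c) (hcd : c ≤ d) (h1 : d < 1) :
    Pm {x | ival c d x ≠ ival a a x} = ENNReal.ofReal (d - c) := by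
  have hsub : Icc c d ⊆ Icc 0 1 := Icc_subset_Icc h0.le h1.le
  have hkey : ∀ x, (ival c d x ≠ ival a a x) ↔ ((x ∈ Icc c d) ↔ ¬ x = a) := by
    intro x
    simp only [ival, ne_eq, decide_eq_decide, mem_Icc]
    have hxa : (a ≤ x ∧ x ≤ a) ↔ x = a := by
      constructor
      · rintro ⟨h1, h2⟩; exact le_antisymm h2 h1
      · rintro rfl; exact ⟨le_rfl, le_rfl⟩
    rw [hxa]; tauto
  rw [Pm, Measure.restrict_apply' measurableSet_Icc]
  apply le_antisymm
  · calc volume ({x | ival c d x ≠ ival a a x} ∩ Icc 0 1)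
        ≤ volume (Icc c d ∪ {a}) := by
          apply measure_mono
          rintro x ⟨hx, -⟩
          rw [mem_setOf_eq, hkey] at hx
          by_cases hxa : x = a
          · exact Or.inr hxa
          · exact Or.inl (hx.mpr hxa)
      _ ≤ volume (Icc c d) + volume ({a} : Set ℝ) := measure_union_le _ _
      _ = ENNReal.ofReal (d - c) := by simp [Real.volume_Icc]
  · calc ENNReal.ofReal (d - c) = volume (Icc c d \ {a}) := by
          rw [measure_diff_null (measure_singleton a), Real.volume_Icc]
      _ ≤ volume ({x | ival c d x ≠ ival a a x} ∩ Icc 0 1) := by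
          apply measure_mono
          rintro x ⟨hx, hxa⟩
          refine ⟨?_, hsub hx⟩
          rw [mem_setOf_eq, hkey]
          simp only [mem_singleton_iff] at hxa
          exact ⟨fun _ => hxa, fun _ => hx⟩

lemma mem_ballP_iff {a c d r : ℝ} (h0 : 0 < c) (hcd : c ≤ d) (h1 : d < 1) (hr : 0 ≤ r) :
    ival c d ∈ ballP (ival a a) r ↔ d - c ≤ r := by
  rw [ballP, mem_setOf_eq, pm_disagree a c d h0 hcd h1,
    ENNReal.ofReal_le_ofReal_iff hr]
  refine ⟨fun h => h.2, fun h => ⟨⟨c, d, h0, hcd, h1, rfl⟩, h⟩⟩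

lemma shatter_iff {a : ℝ} (ha : a ∈ Ioo (0:ℝ) 1) {r : ℝ} (hr : 0 < r) (x₁ x₂ : ℝ) :
    Shatters2 (ballP (ival a a) r) x₁ x₂ ↔
      x₁ ∈ Ioo (0:ℝ) 1 ∧ x₂ ∈ Ioo (0:ℝ) 1 ∧ 0 < |x₁ - x₂| ∧ |x₁ - x₂| ≤ r := by
  constructor
  · intro hS
    obtain ⟨h, hmem, hx1, hx2⟩ := hS true true
    obtain ⟨⟨c, d, hc, hcd, hd, rfl⟩, hball⟩ := hmem
    have hdc : d - c ≤ r := ((mem_ballP_iff hc hcd hd hr.le).1 ⟨⟨c,d,hc,hcd,hd,rfl⟩, hball⟩)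
    rw [ival_true] at hx1 hx2
    obtain ⟨h', hmem', hy1, hy2⟩ := hS true false
    have hne : x₁ ≠ x₂ := by
      intro heq; rw [heq, hy2] at hy1; exact Bool.noConfusion hy1
    refine ⟨⟨lt_of_lt_of_le hc hx1.1, lt_of_le_of_lt hx1.2 hd⟩,
        ⟨lt_of_lt_of_le hc hx2.1, lt_of_le_of_lt hx2.2 hd⟩,
        abs_pos.mpr (sub_ne_zero.mpr hne), ?_⟩
    rw [abs_sub_le_iff]
    constructor <;> linarith [hx1.1, hx1.2, hx2.1, hx2.2]
  · rintro ⟨hx1, hx2, hpos, hler⟩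
    have hne : x₁ ≠ x₂ := sub_ne_zero.mp (abs_pos.mp hpos)
    intro y₁ y₂
    have hmm : min x₁ x₂ ≤ max x₁ x₂ := min_le_max
    cases y₁ <;> cases y₂
    · -- false false
      obtain ⟨e, he, hee⟩ : ∃ e ∈ Ioo (0:ℝ) 1, e ∉ ({x₁, x₂} : Set ℝ) := by
        have : (Ioo (0:ℝ) 1 \ ({x₁, x₂} : Set ℝ)).Nonempty :=
          ((Set.Ioo_infinite (by norm_num)).diff (Set.toFinite _)).nonempty
        obtain ⟨e, he⟩ := this
        exact ⟨e, he.1, he.2⟩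
      simp only [mem_insert_iff, mem_singleton_iff, not_or] at hee
      refine ⟨ival e e, (mem_ballP_iff he.1 le_rfl he.2 hr.le).2 (by linarith), ?_, ?_⟩ <;>
        · rw [ival_false]; intro ⟨hh1, hh2⟩
          exact absurd (le_antisymm hh2 hh1) (by tauto)
    · -- false true
      refine ⟨ival x₂ x₂, (mem_ballP_iff hx2.1 le_rfl hx2.2 hr.le).2 (by linarith), ?_, ?_⟩
      · rw [ival_false]; intro ⟨hh1, hh2⟩; exact hne (le_antisymm hh2 hh1)
      · rw [ival_true]; exact ⟨le_rfl, le_rfl⟩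
    · -- true false
      refine ⟨ival x₁ x₁, (mem_ballP_iff hx1.1 le_rfl hx1.2 hr.le).2 (by linarith), ?_, ?_⟩
      · rw [ival_true]; exact ⟨le_rfl, le_rfl⟩
      · rw [ival_false]; intro ⟨hh1, hh2⟩; exact hne (le_antisymm hh1 hh2)
    · -- true true
      have h1 : 0 < min x₁ x₂ := lt_min hx1.1 hx2.1
      have h2 : max x₁ x₂ < 1 := max_lt hx1.2 hx2.2
      have h3 : max x₁ x₂ - min x₁ x₂ ≤ r := by
        rw [max_sub_min_eq_abs, abs_sub_comm]; exact hler
      refine ⟨ival (min x₁ x₂) (max x₁ x₂),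
        (mem_ballP_iff h1 hmm h2 hr.le).2 h3, ?_, ?_⟩
      · rw [ival_true]; exact ⟨min_le_left _ _, le_max_left _ _⟩
      · rw [ival_true]; exact ⟨min_le_right _ _, le_max_right _ _⟩


def Sset (r : ℝ) : Set (ℝ × ℝ) :=
  {p : ℝ × ℝ | p.1 ∈ Ioo (0:ℝ) 1 ∧ p.2 ∈ Ioo (0:ℝ) 1 ∧ 0 < |p.1 - p.2| ∧ |p.1 - p.2| ≤ r}

lemma Sset_meas (r : ℝ) : MeasurableSet (Sset r) := by
  unfold Sset
  apply MeasurableSet.inter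
  · exact measurableSet_Ioo.preimage measurable_fst
  apply MeasurableSet.inter
  · exact measurableSet_Ioo.preimage measurable_snd
  apply MeasurableSet.inter
  · exact measurableSet_Ioi.preimage ((measurable_fst.sub measurable_snd).abs)
  · exact measurableSet_Iic.preimage ((measurable_fst.sub measurable_snd).abs)

lemma integral_min (r : ℝ) (hr : 0 < r) (hr1 : r ≤ 1) :
    ∫ x in (0:ℝ)..1, min 1 (x + r) = (1 - r)^2/2 + r*(1-r) + r := by
  have h1 : (0:ℝ) ≤ 1 - r := by linarith
  rw [← intervalIntegral.integral_add_adjacent_intervals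
      (a := 0) (b := 1 - r) (c := 1) (f := fun x => min 1 (x + r))
      (Continuous.intervalIntegrable (by fun_prop) _ _)
      (Continuous.intervalIntegrable (by fun_prop) _ _)]
  have e1 : ∫ x in (0:ℝ)..(1-r), min 1 (x + r) = ∫ x in (0:ℝ)..(1-r), (x + r) := by
    apply intervalIntegral.integral_congr
    intro x hx
    rw [uIcc_of_le h1] at hx
    exact min_eq_right (by linarith [hx.2])
  have e2 : ∫ x in (1-r:ℝ)..1, min 1 (x + r) = ∫ x in (1-r:ℝ)..1, (1:ℝ) := by
    apply intervalIntegral.integral_congr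
    intro x hx
    rw [uIcc_of_le (by linarith : (1-r:ℝ) ≤ 1)] at hx
    exact min_eq_left (by linarith [hx.1])
  rw [e1, e2, intervalIntegral.integral_comp_add_right (fun x => x) r]
  simp only [integral_id, intervalIntegral.integral_const, smul_eq_mul, zero_add]
  ring

lemma integral_max (r : ℝ) (hr : 0 < r) (hr1 : r ≤ 1) :
    ∫ x in (0:ℝ)..1, max 0 (x - r) = (1 - r)^2/2 := by
  rw [← intervalIntegral.integral_add_adjacent_intervals
      (a := 0) (b := r) (c := 1) (f := fun x => max 0 (x - r))
      (Continuous.intervalIntegrable (by fun_prop) _ _)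
      (Continuous.intervalIntegrable (by fun_prop) _ _)]
  have e1 : ∫ x in (0:ℝ)..r, max 0 (x - r) = ∫ x in (0:ℝ)..r, (0:ℝ) := by
    apply intervalIntegral.integral_congr
    intro x hx
    rw [uIcc_of_le hr.le] at hx
    exact max_eq_left (by linarith [hx.2])
  have e2 : ∫ x in (r:ℝ)..1, max 0 (x - r) = ∫ x in (r:ℝ)..1, (x - r) := by
    apply intervalIntegral.integral_congr
    intro x hx
    rw [uIcc_of_le hr1] at hx
    exact max_eq_right (by linarith [hx.1])
  rw [e1, e2, intervalIntegral.integral_comp_sub_right (fun x => x) r]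
  simp only [integral_id, intervalIntegral.integral_const, smul_eq_mul, sub_self]
  ring

lemma volume_Sset (r : ℝ) (hr : 0 < r) (hr1 : r ≤ 1) :
    volume (Sset r) = ENNReal.ofReal ((2 - r) * r) := by
  have hmeas := Sset_meas r
  rw [Measure.volume_eq_prod ℝ ℝ, Measure.prod_apply hmeas]
  have hsec : ∀ x : ℝ, volume (Prod.mk x ⁻¹' Sset r) =
      (Ioo (0:ℝ) 1).indicator (fun x => ENNReal.ofReal (min 1 (x+r) - max 0 (x-r))) x := by
    intro x
    by_cases hx : x ∈ Ioo (0:ℝ) 1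
    · rw [indicator_of_mem hx]
      set A := max 0 (x - r) with hA
      set B := min 1 (x + r) with hB
      have hAx : A ≤ x := max_le hx.1.le (by linarith)
      have hxB : x ≤ B := le_min hx.2.le (by linarith)
      apply le_antisymm
      · calc volume (Prod.mk x ⁻¹' Sset r) ≤ volume (Icc A B) := by
              apply measure_mono
              rintro y ⟨hy1, hy2, hy3, hy4⟩
              rw [abs_sub_le_iff] at hy4
              exact ⟨max_le hy2.1.le (by linarith [hy4.1]), le_min hy2.2.le (by linarith [hy4.2])⟩
            _ = ENNReal.ofReal (B - A) := by rw [Real.volume_Icc]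
      · calc ENNReal.ofReal (B - A) = volume (Ioo A B \ {x}) := by
              rw [measure_diff_null (measure_singleton x), Real.volume_Ioo]
            _ ≤ volume (Prod.mk x ⁻¹' Sset r) := by
              apply measure_mono
              rintro y ⟨hy, hyx⟩
              simp only [mem_singleton_iff] at hyx
              have h1 : 0 < y := lt_of_le_of_lt (le_max_left 0 (x-r)) hy.1
              have h2 : y < 1 := lt_of_lt_of_le hy.2 (min_le_left 1 (x+r))
              have h3 : x - r ≤ y := le_of_lt (lt_of_le_of_lt (le_max_right 0 (x-r)) hy.1)
              have h4 : y ≤ x + r := le_of_lt (lt_of_lt_of_le hy.2 (min_le_right 1 (x+r)))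
              refine ⟨hx, ⟨h1, h2⟩, abs_pos.2 (sub_ne_zero.2 (Ne.symm hyx)), ?_⟩
              rw [abs_sub_le_iff]; constructor <;> linarith
    · rw [indicator_of_notMem hx]
      have hempty : Prod.mk x ⁻¹' Sset r = ∅ := by
        ext y
        simp only [mem_preimage, Sset, mem_setOf_eq, mem_empty_iff_false, iff_false]
        rintro ⟨h1, -⟩; exact hx h1
      rw [hempty, measure_empty]
  have hcont : Continuous (fun x : ℝ => min 1 (x + r) - max 0 (x - r)) := by fun_prop
  have hint : IntegrableOn (fun x : ℝ => min 1 (x + r) - max 0 (x - r)) (Ioo 0 1) :=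
    (hcont.integrableOn_Icc (a := 0) (b := 1)).mono_set Ioo_subset_Icc_self
  have hnn : 0 ≤ᵐ[volume.restrict (Ioo (0:ℝ) 1)]
      (fun x : ℝ => min 1 (x + r) - max 0 (x - r)) := by
    filter_upwards [ae_restrict_mem measurableSet_Ioo] with x hx
    have h1 : max 0 (x - r) ≤ x := max_le hx.1.le (by linarith)
    have h2 : x ≤ min 1 (x + r) := le_min hx.2.le (by linarith)
    simp only [Pi.zero_apply]
    linarith
  calc ∫⁻ x, volume (Prod.mk x ⁻¹' Sset r)
      = ∫⁻ x, (Ioo (0:ℝ) 1).indicator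
          (fun x => ENNReal.ofReal (min 1 (x+r) - max 0 (x-r))) x := lintegral_congr hsec
    _ = ∫⁻ x in Ioo (0:ℝ) 1, ENNReal.ofReal (min 1 (x+r) - max 0 (x-r)) :=
        lintegral_indicator measurableSet_Ioo _
    _ = ENNReal.ofReal (∫ x in Ioo (0:ℝ) 1, (min 1 (x+r) - max 0 (x-r))) :=
        (ofReal_integral_eq_lintegral_ofReal hint hnn).symm
    _ = ENNReal.ofReal ((2 - r) * r) := by
        rw [← integral_Ioc_eq_integral_Ioo, ← intervalIntegral.integral_of_le (by norm_num : (0:ℝ) ≤ 1)]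
        rw [intervalIntegral.integral_sub
          (Continuous.intervalIntegrable (by fun_prop) _ _)
          (Continuous.intervalIntegrable (by fun_prop) _ _),
          integral_min r hr hr1, integral_max r hr hr1]
        congr 1
        ring


lemma shatter_set_eq {a : ℝ} (ha : a ∈ Ioo (0:ℝ) 1) {r : ℝ} (hr : 0 < r) :
    {p : ℝ × ℝ | Shatters2 (ballP (ival a a) r) p.1 p.2} = Sset r := by
  ext p
  exact shatter_iff ha hr p.1 p.2

lemma Sset_subset (r : ℝ) : Sset r ⊆ Icc 0 1 ×ˢ Icc 0 1 := by
  rintro p ⟨h1, h2, -⟩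
  exact ⟨⟨h1.1.le, h1.2.le⟩, ⟨h2.1.le, h2.2.le⟩⟩

lemma pm_prod_Sset (r : ℝ) : (Pm.prod Pm) (Sset r) = volume (Sset r) := by
  rw [Pm, Measure.prod_restrict,
    Measure.restrict_apply' (measurableSet_Icc.prod measurableSet_Icc),
    inter_eq_self_of_subset_left (Sset_subset r), Measure.volume_eq_prod ℝ ℝ]

lemma Sset_big {r : ℝ} (hr : 1 ≤ r) : Sset r = Sset 1 := by
  ext p
  unfold Sset
  simp only [mem_setOf_eq]
  constructor <;> rintro ⟨h1, h2, h3, h4⟩ <;> refine ⟨h1, h2, h3, ?_⟩ <;>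
    · rw [abs_sub_le_iff]
      constructor <;> nlinarith [h1.1, h1.2, h2.1, h2.2]

lemma val_eq {a : ℝ} (ha : a ∈ Ioo (0:ℝ) 1) {r : ℝ} (hr : 0 < r) (hr1 : r ≤ 1) :
    ((Pm.prod Pm) {p : ℝ × ℝ | Shatters2 (ballP (ival a a) r) p.1 p.2}).toReal / r
      = 2 - r := by
  rw [shatter_set_eq ha hr, pm_prod_Sset, volume_Sset r hr hr1,
    ENNReal.toReal_ofReal (by nlinarith)]
  field_simp

lemma val_big {a : ℝ} (ha : a ∈ Ioo (0:ℝ) 1) {r : ℝ} (hr : 1 ≤ r) :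
    ((Pm.prod Pm) {p : ℝ × ℝ | Shatters2 (ballP (ival a a) r) p.1 p.2}).toReal / r
      = 1 / r := by
  rw [shatter_set_eq ha (by linarith), pm_prod_Sset, Sset_big hr,
    volume_Sset 1 one_pos le_rfl]
  norm_num

theorem zero_width_interval_order_two_coefficient (a : ℝ) (ha : a ∈ Ioo (0 : ℝ) 1) :
    (∀ r : ℝ, r ∈ Ioo (0 : ℝ) 1 →
      {p : ℝ × ℝ | Shatters2 (ballP (ival a a) r) p.1 p.2} =
        {p : ℝ × ℝ | p.1 ∈ Ioo (0 : ℝ) 1 ∧ p.2 ∈ Ioo (0 : ℝ) 1 ∧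
          0 < |p.1 - p.2| ∧ |p.1 - p.2| ≤ r} ∧
      (volume : Measure (ℝ × ℝ)) {p : ℝ × ℝ | Shatters2 (ballP (ival a a) r) p.1 p.2} =
        ENNReal.ofReal ((2 - r) * r)) ∧
    (∀ ε : ℝ, ε ∈ Ioo (0 : ℝ) 1 → theta2 (ival a a) ε = 2 - ε) := by
  constructor
  · intro r hr
    have hset := shatter_set_eq ha hr.1
    refine ⟨hset, ?_⟩
    rw [hset, volume_Sset r hr.1 hr.2.le]
  · intro ε hε
    set val : ℝ → ℝ := fun r =>
      ((Pm.prod Pm) {p : ℝ × ℝ | Shatters2 (ballP (ival a a) r) p.1 p.2}).toReal / r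
      with hvaldef
    have hnn : (0:ℝ) ≤ 2 - ε := by linarith [hε.2]
    have hval : ∀ r ∈ Ioi ε, val r ≤ 2 - ε := by
      intro r hrmem
      have hrε : ε < r := hrmem
      by_cases h1 : r ≤ 1
      · rw [hvaldef]
        simp only
        rw [val_eq ha (lt_trans hε.1 hrε) h1]
        linarith
      · push_neg at h1
        rw [hvaldef]
        simp only
        rw [val_big ha h1.le]
        rw [div_le_iff₀ (by linarith)]
        nlinarith [hε.1, hε.2]
    have hub : ∀ r : ℝ, (⨆ _ : r ∈ Ioi ε, val r) ≤ 2 - ε := by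
      intro r
      exact Real.iSup_le (fun hrmem => hval r hrmem) hnn
    have hbdd : BddAbove (Set.range fun r : ℝ => ⨆ _ : r ∈ Ioi ε, val r) := by
      refine ⟨2 - ε, ?_⟩
      rintro x ⟨r, rfl⟩
      exact hub r
    have hsup : (⨆ r ∈ Ioi ε, val r) = 2 - ε := by
      apply le_antisymm
      · exact Real.iSup_le hub hnn
      · apply le_of_forall_pos_le_add
        intro δ hδ
        set r : ℝ := min (ε + δ) ((ε + 1)/2) with hrdef
        have hrgt : ε < r := lt_min (by linarith) (by linarith [hε.2])
        have hrle : r ≤ 1 := le_trans (min_le_right _ _) (by linarith [hε.2])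
        have hrval : val r = 2 - r := by
          rw [hvaldef]; simp only
          exact val_eq ha (lt_trans hε.1 hrgt) hrle
        have h2 : 2 - ε - δ ≤ val r := by
          rw [hrval]
          have : r ≤ ε + δ := min_le_left _ _
          linarith
        have h3 : val r ≤ ⨆ r ∈ Ioi ε, val r := by
          refine le_ciSup_of_le hbdd r ?_
          rw [ciSup_pos (show r ∈ Ioi ε from hrgt)]
        linarith
    rw [theta2, hsup]
    exact max_eq_right (by linarith [hε.2])

end
end

section
/- Let g : (0,1) → [0,1] be nondecreasing, let ∂ = lim_{r→0} g(r) (which exists by monotonicity), and define θ(ε) = max{1, sup_{r>ε} g(r)/r}. Then ∂ = 0 if and only if θ(ε) = o(1/ε) as ε → 0, i.e., lim_{ε→0} ε·θ(ε) = 0. -/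
open Set Filter Topology

noncomputable section

/-- `theta g ε = max{1, sup_{r > ε} g(r)/r}`, the abstract disagreement coefficient
associated to a function `g : (0,1) → [0,1]` (so the supremum ranges over `r ∈ (ε,1)`). -/
def theta (g : ℝ → ℝ) (ε : ℝ) : ℝ :=
  max 1 (⨆ r ∈ Ioo ε 1, g r / r)

theorem limit_zero_iff_theta_little_o (g : ℝ → ℝ)
    (hmono : MonotoneOn g (Ioo (0 : ℝ) 1))
    (hrange : ∀ r ∈ Ioo (0 : ℝ) 1, g r ∈ Icc (0 : ℝ) 1)
    (part : ℝ) (hlim : Tendsto g (𝓝[>] (0 : ℝ)) (𝓝 part)) :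
    part = 0 ↔ Tendsto (fun ε => ε * theta g ε) (𝓝[>] (0 : ℝ)) (𝓝 0) := by
  have hle : ∀ r ∈ Ioo (0:ℝ) 1, part ≤ g r := by
    intro r hr
    refine le_of_tendsto hlim ?_
    filter_upwards [Ioo_mem_nhdsGT_of_mem (by exact ⟨le_refl _, hr.1⟩ : (0:ℝ) ∈ Ico 0 r)] with s hs
    exact hmono ⟨hs.1, hs.2.trans hr.2⟩ hr hs.2.le
  have hpos : 0 ≤ part := by
    refine ge_of_tendsto hlim ?_
    filter_upwards [Ioo_mem_nhdsGT_of_mem (by norm_num : (0:ℝ) ∈ Ico 0 1)] with s hs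
    exact (hrange s hs).1
  constructor
  · -- part = 0 → tendsto
    intro hp
    rw [hp] at hlim
    rw [Metric.tendsto_nhdsWithin_nhds]
    intro δ hδ
    have h2 : ∀ᶠ s in 𝓝[>] (0:ℝ), g s < δ/2 := by
      have := hlim (Iio_mem_nhds (by positivity : (0:ℝ) < δ/2))
      filter_upwards [this] with s hs using hs
    rw [eventually_nhdsWithin_iff, Metric.eventually_nhds_iff] at h2
    obtain ⟨r0, hr0, hr0'⟩ := h2
    set η := min (δ/2) (δ * r0 / 2) with hη
    have hηpos : 0 < η := by positivity
    refine ⟨η, hηpos, ?_⟩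
    intro ε hε hεd
    rw [Real.dist_eq, abs_sub_lt_iff] at hεd
    have hεpos : 0 < ε := hε
    have hεη : ε < η := by linarith [hεd.1]
    have hεδ : ε < δ/2 := lt_of_lt_of_le hεη (min_le_left _ _)
    have hεr : ε < δ * r0 / 2 := lt_of_lt_of_le hεη (min_le_right _ _)
    have hS : (⨆ r ∈ Ioo ε 1, g r / r) ≤ max ((δ/2)/ε) (1/r0) := by
      have hM : 0 ≤ max ((δ/2)/ε) (1/r0) := le_max_of_le_right (by positivity)
      refine Real.iSup_le (fun r => Real.iSup_le (fun hr => ?_) hM) hM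
      have hrpos : 0 < r := hεpos.trans hr.1
      have hg := hrange r ⟨hrpos, hr.2⟩
      rcases lt_or_ge r r0 with h | h
      · refine le_max_of_le_left ?_
        have hlt : g r < δ/2 := by
          have := hr0' (show dist r 0 < r0 by rwa [Real.dist_eq, sub_zero, abs_of_pos hrpos])
          exact this hrpos
        exact div_le_div₀ (by positivity) hlt.le hεpos hr.1.le
      · exact le_max_of_le_right (div_le_div₀ zero_le_one hg.2 hr0 h)
    have hεS : ε * (⨆ r ∈ Ioo ε 1, g r / r) < δ := by
      calc ε * (⨆ r ∈ Ioo ε 1, g r / r) ≤ ε * max ((δ/2)/ε) (1/r0) :=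
            mul_le_mul_of_nonneg_left hS hεpos.le
        _ = max (ε * ((δ/2)/ε)) (ε * (1/r0)) := mul_max_of_nonneg _ _ hεpos.le
        _ < δ := by
            refine max_lt ?_ ?_
            · rw [mul_div_cancel₀ _ (ne_of_gt hεpos)]; linarith
            · rw [mul_one_div]; rw [div_lt_iff₀ hr0]; nlinarith
    have hθpos : 0 < ε * theta g ε :=
      mul_pos hεpos (lt_of_lt_of_le one_pos (le_max_left _ _))
    rw [Real.dist_eq, sub_zero, abs_of_pos hθpos]
    unfold theta
    rw [mul_max_of_nonneg _ _ hεpos.le]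
    exact max_lt (by rw [mul_one]; linarith) hεS
  · -- tendsto → part = 0
    intro h
    have key : ∀ᶠ ε in 𝓝[>] (0:ℝ), part/2 ≤ ε * theta g ε := by
      filter_upwards [Ioo_mem_nhdsGT_of_mem (by norm_num : (0:ℝ) ∈ Ico 0 (1/2))] with ε hε
      have hεpos : 0 < ε := hε.1
      have h2ε : 2*ε ∈ Ioo ε 1 := ⟨by linarith, by linarith [hε.2]⟩
      have hbdd : BddAbove (range fun r => ⨆ _ : r ∈ Ioo ε 1, g r / r) := by
        refine ⟨1/ε, ?_⟩
        rintro x ⟨r, rfl⟩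
        refine Real.iSup_le (fun hr => ?_) (by positivity)
        exact div_le_div₀ zero_le_one (hrange r ⟨hεpos.trans hr.1, hr.2⟩).2 hεpos hr.1.le
      have hsup : g (2*ε) / (2*ε) ≤ ⨆ r ∈ Ioo ε 1, g r / r := by
        have := le_ciSup hbdd (2*ε)
        rwa [ciSup_pos h2ε] at this
      have hθ : g (2*ε) / (2*ε) ≤ theta g ε := hsup.trans (le_max_right _ _)
      have hpart : part ≤ g (2*ε) := hle (2*ε) ⟨by linarith, by linarith [hε.2]⟩
      have heq : ε * (g (2*ε) / (2*ε)) = g (2*ε) / 2 := by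
        field_simp
      calc part/2 ≤ g (2*ε) / 2 := by linarith
        _ = ε * (g (2*ε) / (2*ε)) := heq.symm
        _ ≤ ε * theta g ε := mul_le_mul_of_nonneg_left hθ hεpos.le
    have := ge_of_tendsto h key
    linarith

end
end

section
/- Let λ : (0,1) → (0,∞) and L : ℕ × (0,1) → [0,∞) satisfy: λ(ε) → ∞ as ε → 0; for each ε ∈ (0,1), L(1,ε) = 0 and L(n,ε) → ∞ as n → ∞; and for every ℕ-valued function N(ε) with N(ε)/λ(ε) → ∞ as ε → 0, one has L(N(ε),ε)/N(ε) → ∞ as ε → 0. Define L^{-1}(m;ε) = max{n ∈ ℕ : L(n,ε) < m} for m ∈ (0,∞). Then for any function Λ : (0,1) → (0,∞) with Λ(ε)/λ(ε) → ∞ as ε → 0, it holds that L^{-1}(Λ(ε);ε)/Λ(ε) → 0 as ε → 0. -/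
open Set Filter Topology

noncomputable section

/-- `Linv L m ε = max{n ∈ ℕ : L(n,ε) < m}`. -/
def Linv (L : ℕ → ℝ → ℝ) (m : ℝ) (ε : ℝ) : ℕ :=
  sSup {n : ℕ | L n ε < m}

theorem inverse_little_o (lam : ℝ → ℝ) (L : ℕ → ℝ → ℝ)
    (hlam_pos : ∀ ε ∈ Ioo (0 : ℝ) 1, 0 < lam ε)
    (hL_nonneg : ∀ (n : ℕ), ∀ ε ∈ Ioo (0 : ℝ) 1, 0 ≤ L n ε)
    (hlam : Tendsto lam (𝓝[>] (0 : ℝ)) atTop)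
    (hL1 : ∀ ε ∈ Ioo (0 : ℝ) 1, L 1 ε = 0)
    (hLdiv : ∀ ε ∈ Ioo (0 : ℝ) 1, Tendsto (fun n => L n ε) atTop atTop)
    (hLomega : ∀ N : ℝ → ℕ,
      Tendsto (fun ε => (N ε : ℝ) / lam ε) (𝓝[>] (0 : ℝ)) atTop →
      Tendsto (fun ε => L (N ε) ε / (N ε : ℝ)) (𝓝[>] (0 : ℝ)) atTop)
    (Lam : ℝ → ℝ)
    (hLam_pos : ∀ ε ∈ Ioo (0 : ℝ) 1, 0 < Lam ε)
    (hLam : Tendsto (fun ε => Lam ε / lam ε) (𝓝[>] (0 : ℝ)) atTop) :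
    Tendsto (fun ε => (Linv L (Lam ε) ε : ℝ) / Lam ε) (𝓝[>] (0 : ℝ)) (𝓝 0) := by
  -- the sup is attained and the set is bounded
  have hmem : ∀ ε ∈ Ioo (0 : ℝ) 1, L (Linv L (Lam ε) ε) ε < Lam ε := by
    intro ε hε
    have h1 : (1 : ℕ) ∈ {n : ℕ | L n ε < Lam ε} := by
      simp only [Set.mem_setOf_eq, hL1 ε hε]; exact hLam_pos ε hε
    have hbdd : BddAbove {n : ℕ | L n ε < Lam ε} := by
      obtain ⟨M, hM⟩ := Filter.eventually_atTop.mp ((hLdiv ε hε).eventually_ge_atTop (Lam ε))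
      refine ⟨M, fun n hn => ?_⟩
      by_contra h
      exact absurd (hM n (le_of_not_ge h)) (not_le.mpr hn)
    exact Nat.sSup_mem ⟨1, h1⟩ hbdd
  rw [NormedAddCommGroup.tendsto_nhds_zero]
  intro δ hδ
  set N : ℝ → ℕ := fun ε =>
    if δ * Lam ε ≤ (Linv L (Lam ε) ε : ℝ) then Linv L (Lam ε) ε else ⌈Lam ε⌉₊ with hN
  have hIoo : ∀ᶠ ε in 𝓝[>] (0:ℝ), ε ∈ Ioo (0:ℝ) 1 :=
    Ioo_mem_nhdsGT_of_mem (by simp : (0:ℝ) ∈ Ico (0:ℝ) 1)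
  have hNlam : Tendsto (fun ε => (N ε : ℝ) / lam ε) (𝓝[>] (0 : ℝ)) atTop := by
    have key : Tendsto (fun ε => min δ 1 * (Lam ε / lam ε)) (𝓝[>] (0:ℝ)) atTop :=
      hLam.const_mul_atTop (lt_min hδ one_pos)
    refine tendsto_atTop_mono' _ ?_ key
    filter_upwards [hIoo] with ε hε
    have hlp := hlam_pos ε hε
    have hLp := hLam_pos ε hε
    have hnum : min δ 1 * Lam ε ≤ (N ε : ℝ) := by
      by_cases hc : δ * Lam ε ≤ (Linv L (Lam ε) ε : ℝ)
      · simp only [hN, if_pos hc]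
        calc min δ 1 * Lam ε ≤ δ * Lam ε := by
              apply mul_le_mul_of_nonneg_right (min_le_left _ _) hLp.le
          _ ≤ _ := hc
      · simp only [hN, if_neg hc]
        calc min δ 1 * Lam ε ≤ 1 * Lam ε := by
              apply mul_le_mul_of_nonneg_right (min_le_right _ _) hLp.le
          _ = Lam ε := one_mul _
          _ ≤ (⌈Lam ε⌉₊ : ℝ) := Nat.le_ceil _
    calc min δ 1 * (Lam ε / lam ε) = (min δ 1 * Lam ε) / lam ε := by ring
      _ ≤ (N ε : ℝ) / lam ε := by gcongr
  have hbig := (hLomega N hNlam).eventually_gt_atTop (1 / δ)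
  filter_upwards [hIoo, hbig] with ε hε hgt
  have hLp := hLam_pos ε hε
  have hnonneg : (0:ℝ) ≤ (Linv L (Lam ε) ε : ℝ) / Lam ε :=
    div_nonneg (Nat.cast_nonneg _) hLp.le
  rw [Real.norm_of_nonneg hnonneg, div_lt_iff₀ hLp]
  by_contra h
  push_neg at h
  have hc : δ * Lam ε ≤ (Linv L (Lam ε) ε : ℝ) := h
  have hNe : N ε = Linv L (Lam ε) ε := if_pos hc
  have hpos : (0:ℝ) < (Linv L (Lam ε) ε : ℝ) := lt_of_lt_of_le (by positivity) hc
  have hlt : L (N ε) ε / (N ε : ℝ) < Lam ε / (δ * Lam ε) := by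
    rw [hNe]
    exact div_lt_div₀ (hmem ε hε) hc hLp.le (by positivity)
  have heq : Lam ε / (δ * Lam ε) = 1 / δ := by
    field_simp
  rw [heq] at hlt
  exact absurd hgt (not_lt.mpr hlt.le)

end
end

section
/- For every real p ≥ 3: √(p/12) ≤ Γ(p/2)/(Γ((p−1)/2)·Γ(1/2)) ≤ (1/2)·√(p−2), where Γ is the Gamma function and Γ(1/2) = √π. -/
/-!
Everything rests on the monotonicity of `g x = Γ(x + 1/2)² / (x Γ(x)²)` (`gammaAddHalfRatio`)
on `(0, ∞)`. Log-convexity of `Γ` gives `x / (x + 1/2) ≤ g x ≤ 1`, and `Γ(x + 1) = x Γ(x)` gives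
`g x = g (x + n) * ∏_{j<n} w (x + j)` with `w t = t (t + 1) / (t + 1/2)²`. As `w` increases,
comparing these identities at `x ≤ y` yields `g x ≤ g y * (1 + 1 / (2 (y + n)))`; let `n → ∞`.
The two bounds are then `g ((p - 1)/2) ≥ g 1 = π/4` and `g ((p - 2)/2) ≥ g (1/2) = 2/π`.
-/

open Real Set Filter Topology Finset

theorem Gamma_add_half_sq_le {x : ℝ} (hx : 0 < x) : Gamma (x + 1 / 2) ^ 2 ≤ x * Gamma x ^ 2 := by
  have hconv := Gamma_mul_add_mul_le_rpow_Gamma_mul_rpow_Gamma (a := 1 / 2) (b := 1 / 2)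
    hx (by linarith : 0 < x + 1) one_half_pos one_half_pos (by norm_num)
  have hG := Gamma_pos_of_pos hx
  have hG1 := Gamma_pos_of_pos (by linarith : 0 < x + 1)
  have hG_half := Gamma_pos_of_pos (by linarith : 0 < x + 1 / 2)
  rw [show 1 / 2 * x + 1 / 2 * (x + 1) = x + 1 / 2 by ring, ← mul_rpow hG.le hG1.le,
    ← sqrt_eq_rpow, le_sqrt hG_half.le (by positivity),
    Gamma_add_one hx.ne'] at hconv
  linarith

theorem mul_Gamma_sq_le_Gamma_add_half_sq {x : ℝ} (hx : 0 < x) :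
    x ^ 2 * Gamma x ^ 2 ≤ (x + 1 / 2) * Gamma (x + 1 / 2) ^ 2 := by
  have h := Gamma_add_half_sq_le (by linarith : 0 < x + 1 / 2)
  rwa [add_assoc, add_halves, Gamma_add_one hx.ne', mul_pow] at h

/-- At `t = k` this is the `k`-th factor `(2k)(2k+2)/(2k+1)²` of the Wallis product. -/
noncomputable def wallisFactor (t : ℝ) : ℝ := t * (t + 1) / (t + 1 / 2) ^ 2

theorem wallisFactor_pos {t : ℝ} (ht : 0 < t) : 0 < wallisFactor t := by
  unfold wallisFactor; positivity

theorem monotoneOn_wallisFactor : MonotoneOn wallisFactor (Ioi 0) := by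
  intro s (hs : 0 < s) t _ hst
  have one_sub_form : ∀ u : ℝ, 0 < u → wallisFactor u = 1 - 1 / 4 / (u + 1 / 2) ^ 2 := by
    intro u hu
    unfold wallisFactor
    field_simp
    ring
  rw [one_sub_form s hs, one_sub_form t (hs.trans_le hst)]
  gcongr

noncomputable def gammaAddHalfRatio (x : ℝ) : ℝ := Gamma (x + 1 / 2) ^ 2 / (x * Gamma x ^ 2)

theorem gammaAddHalfRatio_le_one {x : ℝ} (hx : 0 < x) : gammaAddHalfRatio x ≤ 1 := by
  have := Gamma_pos_of_pos hx
  rw [gammaAddHalfRatio, div_le_one (by positivity)]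
  exact Gamma_add_half_sq_le hx

theorem div_add_half_le_gammaAddHalfRatio {x : ℝ} (hx : 0 < x) :
    x / (x + 1 / 2) ≤ gammaAddHalfRatio x := by
  have := Gamma_pos_of_pos hx
  rw [gammaAddHalfRatio, div_le_div_iff₀ (by positivity) (by positivity)]
  nlinarith [mul_Gamma_sq_le_Gamma_add_half_sq hx]

theorem gammaAddHalfRatio_eq_wallisFactor_mul {x : ℝ} (hx : 0 < x) :
    gammaAddHalfRatio x = wallisFactor x * gammaAddHalfRatio (x + 1) := by
  have := Gamma_pos_of_pos hx
  rw [gammaAddHalfRatio, gammaAddHalfRatio, wallisFactor, add_right_comm,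
    Gamma_add_one (by positivity), Gamma_add_one hx.ne']
  field_simp

theorem gammaAddHalfRatio_eq_prod_mul {x : ℝ} (hx : 0 < x) (n : ℕ) :
    gammaAddHalfRatio x =
      (∏ j ∈ range n, wallisFactor (x + j)) * gammaAddHalfRatio (x + n) := by
  induction n with
  | zero => simp
  | succ n ih =>
    rw [ih, gammaAddHalfRatio_eq_wallisFactor_mul (by positivity), prod_range_succ]
    push_cast
    ring_nf

theorem gammaAddHalfRatio_le_prod_wallisFactor {x : ℝ} (hx : 0 < x) (n : ℕ) :
    gammaAddHalfRatio x ≤ ∏ j ∈ range n, wallisFactor (x + j) := by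
  rw [gammaAddHalfRatio_eq_prod_mul hx n]
  exact mul_le_of_le_one_right (prod_nonneg fun j _ => (wallisFactor_pos (by positivity)).le)
    (gammaAddHalfRatio_le_one (by positivity))

theorem prod_wallisFactor_le_gammaAddHalfRatio_mul {y : ℝ} (hy : 0 < y) (n : ℕ) :
    ∏ j ∈ range n, wallisFactor (y + j) ≤ gammaAddHalfRatio y * (1 + (y + n)⁻¹ / 2) := by
  have hyn : 0 < y + n := by positivity
  calc ∏ j ∈ range n, wallisFactor (y + j)
      = (∏ j ∈ range n, wallisFactor (y + j)) * ((y + n) / (y + n + 1 / 2)) *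
          (1 + (y + n)⁻¹ / 2) := by field_simp
    _ ≤ gammaAddHalfRatio y * (1 + (y + n)⁻¹ / 2) := by
        rw [gammaAddHalfRatio_eq_prod_mul hy n]
        gcongr
        · exact prod_nonneg fun j _ => (wallisFactor_pos (by positivity)).le
        · exact div_add_half_le_gammaAddHalfRatio hyn

theorem monotoneOn_gammaAddHalfRatio : MonotoneOn gammaAddHalfRatio (Ioi 0) := by
  intro x (hx : 0 < x) y (hy : 0 < y) hxy
  have bound (n : ℕ) : gammaAddHalfRatio x ≤ gammaAddHalfRatio y * (1 + (y + n)⁻¹ / 2) :=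
    calc gammaAddHalfRatio x ≤ ∏ j ∈ range n, wallisFactor (x + j) :=
          gammaAddHalfRatio_le_prod_wallisFactor hx n
      _ ≤ ∏ j ∈ range n, wallisFactor (y + j) :=
          prod_le_prod (fun j _ => (wallisFactor_pos (by positivity)).le) fun j _ =>
            monotoneOn_wallisFactor (by simp; positivity) (by simp; positivity) (by linarith)
      _ ≤ gammaAddHalfRatio y * (1 + (y + n)⁻¹ / 2) :=
          prod_wallisFactor_le_gammaAddHalfRatio_mul hy n
  have hlim : Tendsto (fun n : ℕ => gammaAddHalfRatio y * (1 + (y + n)⁻¹ / 2)) atTop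
      (𝓝 (gammaAddHalfRatio y)) := by
    have h := (tendsto_atTop_add_const_left _ y tendsto_natCast_atTop_atTop).inv_tendsto_atTop
    simpa using (tendsto_const_nhds (x := gammaAddHalfRatio y)).mul
      ((tendsto_const_nhds (x := (1 : ℝ))).add (h.div_const 2))
  exact ge_of_tendsto' hlim bound

theorem gammaAddHalfRatio_mul_le {x y : ℝ} (hx : 0 < x) (hxy : x ≤ y) :
    gammaAddHalfRatio x * (y * Gamma y ^ 2) ≤ Gamma (y + 1 / 2) ^ 2 := by
  have hy := hx.trans_le hxy
  have := Gamma_pos_of_pos hy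
  have hmono : gammaAddHalfRatio x ≤ Gamma (y + 1 / 2) ^ 2 / (y * Gamma y ^ 2) :=
    monotoneOn_gammaAddHalfRatio hx hy hxy
  rwa [le_div_iff₀ (by positivity)] at hmono

theorem gammaAddHalfRatio_one_half : gammaAddHalfRatio (1 / 2) = 2 / π := by
  rw [gammaAddHalfRatio, add_halves, Gamma_one, Gamma_one_half_eq, sq_sqrt pi_pos.le]
  field_simp

theorem gammaAddHalfRatio_one : gammaAddHalfRatio 1 = π / 4 := by
  rw [gammaAddHalfRatio, add_comm, Gamma_add_one one_half_pos.ne', Gamma_one_half_eq, Gamma_one,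
    mul_pow, sq_sqrt pi_pos.le]
  ring

theorem gamma_ratio_bounds : ∀ p : ℝ, 3 ≤ p →
    Real.sqrt (p / 12) ≤ Real.Gamma (p / 2) / (Real.Gamma ((p - 1) / 2) * Real.Gamma (1 / 2)) ∧
    Real.Gamma (p / 2) / (Real.Gamma ((p - 1) / 2) * Real.Gamma (1 / 2)) ≤
      (1 / 2) * Real.sqrt (p - 2) := by
  intro p hp
  have hπ := pi_pos
  have hΓ : 0 < Gamma ((p - 1) / 2) := Gamma_pos_of_pos (by linarith)
  rw [Gamma_one_half_eq]
  constructor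
  · have h := gammaAddHalfRatio_mul_le one_pos (show 1 ≤ (p - 1) / 2 by linarith)
    rw [gammaAddHalfRatio_one, show (p - 1) / 2 + 1 / 2 = p / 2 by ring] at h
    rw [sqrt_le_left (by positivity), div_pow, mul_pow, sq_sqrt hπ.le, le_div_iff₀ (by positivity)]
    nlinarith
  · have h := gammaAddHalfRatio_mul_le one_half_pos (show 1 / 2 ≤ (p - 2) / 2 by linarith)
    rw [gammaAddHalfRatio_one_half, show (p - 2) / 2 + 1 / 2 = (p - 1) / 2 by ring] at h
    have hp2_pos : 0 < (p - 2) / 2 := by linarith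
    have hΓ' : 0 < Gamma ((p - 2) / 2) := Gamma_pos_of_pos hp2_pos
    have hp2 : Gamma (p / 2) = (p - 2) / 2 * Gamma ((p - 2) / 2) := by
      rw [← Gamma_add_one hp2_pos.ne']; ring_nf
    rw [div_mul_eq_mul_div, div_le_iff₀ hπ] at h
    rw [div_le_iff₀ (by positivity), hp2, ← pow_le_pow_iff_left₀ (by positivity) (by positivity)
      two_ne_zero, mul_pow, mul_pow, mul_pow, mul_pow, sq_sqrt hπ.le, sq_sqrt (by linarith)]
    nlinarith [mul_le_mul_of_nonneg_left h (by linarith : (0 : ℝ) ≤ p - 2)]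
end

section
/- For every integer p ≥ 3 and every z ∈ (0,1], the normalized spherical cap area C_p(z)/A_p = (1/2)·I_{2z−z²}((p−1)/2, 1/2) satisfies C_p(z)/A_p ≥ (2z−z²)^{(p−1)/2} / √(12p), where I_x(a,b) = (Γ(a+b)/(Γ(a)Γ(b)))·∫₀^x t^{a−1}(1−t)^{b−1} dt is the regularized incomplete Beta function. -/
open MeasureTheory

noncomputable section

/-- The regularized incomplete Beta function
`I_x(a,b) = (Γ(a+b)/(Γ(a)Γ(b))) ∫₀ˣ t^{a−1}(1−t)^{b−1} dt`. -/
def regIncBeta (a b x : ℝ) : ℝ :=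
  (Real.Gamma (a + b) / (Real.Gamma a * Real.Gamma b)) *
    ∫ t in (0 : ℝ)..x, t ^ (a - 1) * (1 - t) ^ (b - 1)

lemma gamma_mid (u : ℝ) (hu : 0 < u) :
    Real.Gamma (u + 1) ^ 2 ≤ Real.Gamma (u + 1/2) * Real.Gamma (u + 3/2) := by
  have h := Real.convexOn_log_Gamma.2 (Set.mem_Ioi.2 (by linarith : (0:ℝ) < u + 1/2))
    (Set.mem_Ioi.2 (by linarith : (0:ℝ) < u + 3/2)) (by norm_num : (0:ℝ) ≤ 1/2)
    (by norm_num : (0:ℝ) ≤ 1/2) (by norm_num)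
  have hmid : (1/2 : ℝ) • (u + 1/2) + (1/2 : ℝ) • (u + 3/2) = u + 1 := by
    rw [smul_eq_mul, smul_eq_mul]; ring
  rw [hmid] at h
  simp only [Function.comp_apply, smul_eq_mul] at h
  have hA : 0 < Real.Gamma (u + 1/2) := Real.Gamma_pos_of_pos (by linarith)
  have hB : 0 < Real.Gamma (u + 3/2) := Real.Gamma_pos_of_pos (by linarith)
  have hC : 0 < Real.Gamma (u + 1) := Real.Gamma_pos_of_pos (by linarith)
  have h2 : Real.log (Real.Gamma (u+1) ^ 2) ≤
      Real.log (Real.Gamma (u+1/2) * Real.Gamma (u+3/2)) := by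
    rw [Real.log_pow, Real.log_mul hA.ne' hB.ne']
    push_cast
    linarith
  exact (Real.log_le_log_iff (by positivity) (by positivity)).1 h2

lemma gamma_half_lb (u : ℝ) (hu : 0 < u) :
    u * Real.Gamma u ≤ Real.Gamma (u + 1/2) * Real.sqrt (u + 1/2) := by
  have h1 := gamma_mid u hu
  have h2 : Real.Gamma (u + 3/2) = (u + 1/2) * Real.Gamma (u + 1/2) := by
    have := Real.Gamma_add_one (s := u + 1/2) (by positivity)
    rw [show u + 1/2 + 1 = u + 3/2 by ring] at this
    exact this
  have h3 : Real.Gamma (u + 1) = u * Real.Gamma u := Real.Gamma_add_one hu.ne'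
  rw [h2, h3] at h1
  have hA : 0 < Real.Gamma (u + 1/2) := Real.Gamma_pos_of_pos (by linarith)
  have key : (u * Real.Gamma u) ^ 2 ≤ (Real.Gamma (u + 1/2) * Real.sqrt (u + 1/2)) ^ 2 := by
    have : (Real.sqrt (u + 1/2)) ^ 2 = u + 1/2 := Real.sq_sqrt (by positivity)
    nlinarith [this]
  have hpos : 0 ≤ u * Real.Gamma u := by positivity
  exact (pow_le_pow_iff_left₀ hpos (by positivity) two_ne_zero).1 key

lemma integrand_integrable (a x : ℝ) (ha : 1 ≤ a) (hx0 : 0 < x) (hx1 : x ≤ 1) :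
    IntervalIntegrable (fun t : ℝ => t ^ (a-1) * (1-t) ^ ((1:ℝ)/2 - 1)) volume 0 x := by
  have hg : IntervalIntegrable (fun t : ℝ => (1-t) ^ ((1:ℝ)/2 - 1)) volume 0 x := by
    have h0 : IntervalIntegrable (fun s : ℝ => s ^ ((1:ℝ)/2 - 1)) volume (1 - 0) (1 - x) :=
      intervalIntegral.intervalIntegrable_rpow' (by norm_num)
    simpa using h0.comp_sub_left 1
  apply hg.mono_fun
  · apply Measurable.aestronglyMeasurable
    fun_prop
  · filter_upwards [ae_restrict_mem measurableSet_uIoc] with t ht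
    rw [Set.uIoc_of_le hx0.le] at ht
    obtain ⟨ht0, ht1⟩ := ht
    have h1 : (0:ℝ) ≤ t ^ (a-1) := Real.rpow_nonneg ht0.le _
    have h2 : t ^ (a-1) ≤ 1 := Real.rpow_le_one ht0.le (by linarith) (by linarith)
    have h3 : (0:ℝ) ≤ (1-t) ^ ((1:ℝ)/2 - 1) := Real.rpow_nonneg (by linarith) _
    simp only [Real.norm_eq_abs, abs_of_nonneg (mul_nonneg h1 h3), abs_of_nonneg h3]
    nlinarith

lemma integral_lb (a x : ℝ) (ha : 1 ≤ a) (hx0 : 0 < x) (hx1 : x ≤ 1) :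
    x ^ a / a ≤ ∫ t in (0:ℝ)..x, t ^ (a-1) * (1-t) ^ ((1:ℝ)/2 - 1) := by
  have hint := integrand_integrable a x ha hx0 hx1
  have hbase : IntervalIntegrable (fun t : ℝ => t ^ (a-1)) volume 0 x :=
    intervalIntegral.intervalIntegrable_rpow' (by linarith)
  have hval : (∫ t in (0:ℝ)..x, t ^ (a-1)) = x ^ a / a := by
    rw [integral_rpow (Or.inl (by linarith))]
    rw [Real.zero_rpow (by intro h; rw [show a - 1 + 1 = a by ring] at h; linarith)]
    rw [show a - 1 + 1 = a by ring]
    ring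
  rw [← hval]
  apply intervalIntegral.integral_mono_ae_restrict hx0.le hbase hint
  have hne : ∀ᵐ t : ℝ ∂(volume.restrict (Set.Icc 0 x)), t ≠ 1 := by
    apply ae_restrict_of_ae
    rw [MeasureTheory.ae_iff]
    simpa [Set.setOf_eq_eq_singleton] using Real.volume_singleton (a := 1)
  filter_upwards [ae_restrict_mem measurableSet_Icc, hne] with t ht htne
  obtain ⟨ht0, ht1⟩ := ht
  have halt : t < 1 := lt_of_le_of_ne (ht1.trans hx1) htne
  have h1 : (1:ℝ) ≤ (1-t) ^ ((1:ℝ)/2 - 1) := by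
    rw [show (1:ℝ)/2 - 1 = -(1/2) by norm_num, Real.rpow_neg (by linarith)]
    exact (one_le_inv₀ (Real.rpow_pos_of_pos (by linarith) _)).2
      (Real.rpow_le_one (by linarith) (by linarith) (by norm_num))
  calc t ^ (a-1) = t ^ (a-1) * 1 := by ring
  _ ≤ t ^ (a-1) * (1-t) ^ ((1:ℝ)/2 - 1) := by
      exact mul_le_mul_of_nonneg_left h1 (Real.rpow_nonneg ht0 _)

/-- Lower bound on the normalized spherical cap area
`C_p(z)/A_p = (1/2) I_{2z−z²}((p−1)/2, 1/2)`. -/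
theorem spherical_cap_lower_bound : ∀ p : ℕ, 3 ≤ p → ∀ z : ℝ, z ∈ Set.Ioc (0 : ℝ) 1 →
    (2 * z - z ^ 2) ^ (((p : ℝ) - 1) / 2) / Real.sqrt (12 * p) ≤
      (1 / 2) * regIncBeta (((p : ℝ) - 1) / 2) (1 / 2) (2 * z - z ^ 2) := by
  intro p hp z hz
  obtain ⟨hz0, hz1⟩ := hz
  set a : ℝ := ((p : ℝ) - 1) / 2 with ha_def
  set x : ℝ := 2 * z - z ^ 2 with hx_def
  have hp3 : (3:ℝ) ≤ (p:ℝ) := by exact_mod_cast hp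
  have ha : 1 ≤ a := by rw [ha_def]; linarith
  have ha0 : 0 < a := by linarith
  have hx0 : 0 < x := by rw [hx_def]; nlinarith
  have hx1 : x ≤ 1 := by rw [hx_def]; nlinarith [sq_nonneg (z - 1)]
  have hxa : 0 < x ^ a := Real.rpow_pos_of_pos hx0 _
  have hGa : 0 < Real.Gamma a := Real.Gamma_pos_of_pos ha0
  have hGah : 0 < Real.Gamma (a + 1/2) := Real.Gamma_pos_of_pos (by linarith)
  have hs12 : 0 < Real.sqrt (12 * p) := Real.sqrt_pos.2 (by positivity)
  -- Gamma ratio bound : 2*a / sqrt(12 p) ≤ Gamma(a+1/2)/(Gamma a * sqrt π)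
  have hW := gamma_half_lb a ha0
  have hhalf : a + 1/2 = (p:ℝ)/2 := by rw [ha_def]; ring
  have hstep : 2 * (Real.sqrt ((p:ℝ)/2) * Real.sqrt Real.pi) ≤ Real.sqrt (12 * p) := by
    have e1 : Real.sqrt ((p:ℝ)/2) * Real.sqrt Real.pi = Real.sqrt ((p:ℝ)/2 * Real.pi) :=
      (Real.sqrt_mul (by positivity) _).symm
    have e2 : 2 * Real.sqrt ((p:ℝ)/2 * Real.pi) = Real.sqrt (4 * ((p:ℝ)/2 * Real.pi)) := by
      rw [show (4:ℝ) * ((p:ℝ)/2 * Real.pi) = 2^2 * ((p:ℝ)/2 * Real.pi) by ring,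
        Real.sqrt_mul (by norm_num : (0:ℝ) ≤ 2^2) ((p:ℝ)/2 * Real.pi),
        Real.sqrt_sq (by norm_num : (0:ℝ) ≤ 2)]
    rw [e1, e2]
    apply Real.sqrt_le_sqrt
    nlinarith [Real.pi_le_four, hp3]
  have hKey : 2 * a / Real.sqrt (12 * p) ≤
      Real.Gamma (a + 1/2) / (Real.Gamma a * Real.sqrt Real.pi) := by
    rw [hhalf] at hW hGah ⊢
    rw [div_le_div_iff₀ hs12 (by positivity)]
    have hsp : 0 < Real.sqrt ((p:ℝ)/2) := Real.sqrt_pos.2 (by positivity)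
    have hspi : 0 < Real.sqrt Real.pi := Real.sqrt_pos.2 Real.pi_pos
    nlinarith [mul_le_mul_of_nonneg_right hW (le_of_lt hspi),
      mul_le_mul_of_nonneg_left hstep hGah.le]
  -- integral bound
  have hI := integral_lb a x ha hx0 hx1
  have hIpos : 0 ≤ x ^ a / a := by positivity
  -- unfold
  rw [regIncBeta, Real.Gamma_one_half_eq]
  rw [show (1:ℝ)/2 - 1 = (1:ℝ)/2 - 1 from rfl]
  set I : ℝ := ∫ t in (0:ℝ)..x, t ^ (a-1) * (1-t) ^ ((1:ℝ)/2 - 1) with hI_def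
  have hK : 0 < Real.Gamma (a + 1/2) / (Real.Gamma a * Real.sqrt Real.pi) := by positivity
  calc x ^ a / Real.sqrt (12 * p)
      = (1/2) * (2 * a / Real.sqrt (12 * p)) * (x ^ a / a) := by
        field_simp
    _ ≤ (1/2) * (Real.Gamma (a + 1/2) / (Real.Gamma a * Real.sqrt Real.pi)) * (x ^ a / a) := by
        apply mul_le_mul_of_nonneg_right _ hIpos
        linarith
    _ ≤ (1/2) * (Real.Gamma (a + 1/2) / (Real.Gamma a * Real.sqrt Real.pi)) * I := by
        apply mul_le_mul_of_nonneg_left hI (by positivity)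
    _ = 1 / 2 * (Real.Gamma (a + 1/2) / (Real.Gamma a * Real.sqrt Real.pi) * I) := by ring


end
end

section
/- Let (a,b) ⊆ [0,1] be a nonempty open interval. For every sequence of (possibly randomized) estimators p̂_n : {0,1}^n → [0,1], there exists p ∈ (a,b) such that, when B_1, B_2, … are i.i.d. Bernoulli(p) random variables independent of any internal randomness of the estimators, the mean squared error satisfies E[(p̂_n(B_1,…,B_n) − p)²] ≠ o(1/n); that is, limsup_{n→∞} n·E[(p̂_n(B_1,…,B_n) − p)²] > 0. -/
open MeasureTheory Filter Topology Finset

lemma sum_prod_bool (n : ℕ) (F : Bool → ℝ) :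
    ∑ s : Fin n → Bool, ∏ i, F (s i) = (F true + F false) ^ n := by
  induction n with
  | zero => simp
  | succ n ih =>
    rw [← Fintype.sum_equiv (Fin.consEquiv (fun _ : Fin (n+1) => Bool))
      (fun x => F x.1 * ∏ i, F (x.2 i)) (fun s => ∏ i, F (s i)) ?_]
    · rw [Fintype.sum_prod_type]
      simp only [← Finset.mul_sum, ih]
      rw [Fintype.sum_bool, pow_succ]
      ring
    · intro x
      simp only [Fin.consEquiv_apply]
      rw [Fin.prod_univ_succ, Fin.cons_zero]
      simp [Fin.cons_succ]

lemma sum_bern (n : ℕ) {p : ℝ} (hp0 : 0 ≤ p) (hp1 : p ≤ 1) :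
    ∑ s : Fin n → Bool, (∏ i, if s i then p else 1-p) = 1 := by
  have := sum_prod_bool n (fun b => if b then p else 1-p)
  simpa using this

lemma risk_lb (n : ℕ) {Ω : Type*} [MeasurableSpace Ω] (μ : Measure Ω) [IsProbabilityMeasure μ]
    (T : (Fin n → Bool) → Ω → ℝ) (hT : ∀ s, Measurable (T s))
    (hTb : ∀ s ω, T s ω ∈ Set.Icc (0:ℝ) 1)
    (p q : ℝ) (hp0 : 0 ≤ p) (hp1 : p ≤ 1) (hq0 : 0 ≤ q) (hq1 : q ≤ 1) :
    ((Real.sqrt (p*q) + Real.sqrt ((1-p)*(1-q)))^n)^2 * ((q-p)^2/4) ≤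
      (∑ s : Fin n → Bool, (∏ i, if s i then p else 1-p) * ∫ ω, (T s ω - p)^2 ∂μ)
      + ∑ s : Fin n → Bool, (∏ i, if s i then q else 1-q) * ∫ ω, (T s ω - q)^2 ∂μ := by
  set ρ : ℝ := Real.sqrt (p*q) + Real.sqrt ((1-p)*(1-q)) with hρ
  set wp : (Fin n → Bool) → ℝ := fun s => ∏ i, if s i then p else 1-p with hwp
  set wq : (Fin n → Bool) → ℝ := fun s => ∏ i, if s i then q else 1-q with hwq
  have hwp0 : ∀ s, 0 ≤ wp s := fun s => Finset.prod_nonneg (fun i _ => by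
    by_cases h : s i <;> simp [h] <;> linarith)
  have hwq0 : ∀ s, 0 ≤ wq s := fun s => Finset.prod_nonneg (fun i _ => by
    by_cases h : s i <;> simp [h] <;> linarith)
  -- integrability
  have hint : ∀ (s : Fin n → Bool) (r : ℝ), 0 ≤ r → r ≤ 1 →
      Integrable (fun ω => (T s ω - r)^2) μ := by
    intro s r hr0 hr1
    refine ⟨((hT s).sub measurable_const).pow_const 2 |>.aestronglyMeasurable, ?_⟩
    refine HasFiniteIntegral.of_bounded (C := 1) (Filter.Eventually.of_forall fun ω => ?_)
    have h1 := (hTb s ω).1; have h2 := (hTb s ω).2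
    rw [Real.norm_eq_abs, abs_of_nonneg (sq_nonneg _)]
    nlinarith
  set Ip : (Fin n → Bool) → ℝ := fun s => ∫ ω, (T s ω - p)^2 ∂μ with hIp
  set Iq : (Fin n → Bool) → ℝ := fun s => ∫ ω, (T s ω - q)^2 ∂μ with hIq
  have hIp0 : ∀ s, 0 ≤ Ip s := fun s => integral_nonneg (fun ω => sq_nonneg _)
  have hIq0 : ∀ s, 0 ≤ Iq s := fun s => integral_nonneg (fun ω => sq_nonneg _)
  have key1 : ∀ s, (q-p)^2/2 ≤ Ip s + Iq s := by
    intro s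
    have : Ip s + Iq s = ∫ ω, ((T s ω - p)^2 + (T s ω - q)^2) ∂μ :=
      (integral_add (hint s p hp0 hp1) (hint s q hq0 hq1)).symm
    rw [this]
    have hc : (q-p)^2/2 = ∫ _ω, ((q-p)^2/2) ∂μ := by simp
    rw [hc]
    refine integral_mono (integrable_const _) ((hint s p hp0 hp1).add (hint s q hq0 hq1))
      (fun ω => ?_)
    nlinarith [sq_nonneg (2 * T s ω - p - q)]
  set m : (Fin n → Bool) → ℝ := fun s => min (wp s) (wq s) with hm
  set M : (Fin n → Bool) → ℝ := fun s => max (wp s) (wq s) with hM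
  have hm0 : ∀ s, 0 ≤ m s := fun s => le_min (hwp0 s) (hwq0 s)
  have hM0 : ∀ s, 0 ≤ M s := fun s => le_trans (hwp0 s) (le_max_left _ _)
  set g : (Fin n → Bool) → ℝ := fun s =>
    ∏ i, if s i then Real.sqrt (p*q) else Real.sqrt ((1-p)*(1-q)) with hg
  have hg0 : ∀ s, 0 ≤ g s := fun s => Finset.prod_nonneg (fun i _ => by
    by_cases h : s i <;> simp [h, Real.sqrt_nonneg])
  have hgsq : ∀ s, g s ^ 2 = wp s * wq s := by
    intro s
    rw [hg, hwp, hwq]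
    simp only
    rw [← Finset.prod_pow, ← Finset.prod_mul_distrib]
    refine Finset.prod_congr rfl (fun i _ => ?_)
    by_cases h : s i <;>
      simp [h, Real.sq_sqrt, mul_nonneg hp0 hq0,
        Real.sq_sqrt (mul_nonneg (by linarith : (0:ℝ) ≤ 1-p) (by linarith : (0:ℝ) ≤ 1-q))]
  have hgmM : ∀ s, g s = Real.sqrt (m s) * Real.sqrt (M s) := by
    intro s
    rw [← Real.sqrt_mul (hm0 s), hm, hM]
    simp only [min_mul_max]
    rw [← hgsq s, Real.sqrt_sq (hg0 s)]
  have hsg : ∑ s, g s = ρ^n := by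
    have := sum_prod_bool n (fun b => if b then Real.sqrt (p*q) else Real.sqrt ((1-p)*(1-q)))
    simpa [hρ] using this
  have hsM : ∑ s, M s ≤ 2 := by
    have : ∀ s, M s ≤ wp s + wq s := fun s =>
      max_le (le_add_of_nonneg_right (hwq0 s)) (le_add_of_nonneg_left (hwp0 s))
    calc ∑ s, M s ≤ ∑ s, (wp s + wq s) := Finset.sum_le_sum (fun s _ => this s)
    _ = 2 := by
        rw [Finset.sum_add_distrib, sum_bern n hp0 hp1, sum_bern n hq0 hq1]; norm_num
  have hCS : (ρ^n)^2 ≤ (∑ s, m s) * 2 := by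
    calc (ρ^n)^2 = (∑ s, Real.sqrt (m s) * Real.sqrt (M s))^2 := by
          rw [← hsg]; congr 1; exact Finset.sum_congr rfl (fun s _ => hgmM s)
    _ ≤ (∑ s, Real.sqrt (m s)^2) * ∑ s, Real.sqrt (M s)^2 :=
          Finset.sum_mul_sq_le_sq_mul_sq _ _ _
    _ = (∑ s, m s) * ∑ s, M s := by
          rw [Finset.sum_congr rfl (fun s _ => Real.sq_sqrt (hm0 s)),
            Finset.sum_congr rfl (fun s _ => Real.sq_sqrt (hM0 s))]
    _ ≤ (∑ s, m s) * 2 :=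
          mul_le_mul_of_nonneg_left hsM (Finset.sum_nonneg (fun s _ => hm0 s))
  have h1 : ∀ s, m s * ((q-p)^2/2) ≤ wp s * Ip s + wq s * Iq s := by
    intro s
    calc m s * ((q-p)^2/2) ≤ m s * (Ip s + Iq s) :=
          mul_le_mul_of_nonneg_left (key1 s) (hm0 s)
    _ = m s * Ip s + m s * Iq s := by ring
    _ ≤ wp s * Ip s + wq s * Iq s :=
          add_le_add (mul_le_mul_of_nonneg_right (min_le_left _ _) (hIp0 s))
            (mul_le_mul_of_nonneg_right (min_le_right _ _) (hIq0 s))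
  calc (ρ^n)^2 * ((q-p)^2/4) = ((ρ^n)^2/2) * ((q-p)^2/2) := by ring
  _ ≤ (∑ s, m s) * ((q-p)^2/2) := by
      apply mul_le_mul_of_nonneg_right _ (by positivity)
      linarith [hCS]
  _ = ∑ s, m s * ((q-p)^2/2) := by rw [Finset.sum_mul]
  _ ≤ ∑ s, (wp s * Ip s + wq s * Iq s) := Finset.sum_le_sum (fun s _ => h1 s)
  _ = (∑ s, wp s * Ip s) + ∑ s, wq s * Iq s := Finset.sum_add_distrib

lemma sqrt_mul_ge {e x y : ℝ} (he : 0 < e) (hx : e ≤ x) (hy : e ≤ y) :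
    (x+y)/2 - (x-y)^2/(8*e) ≤ Real.sqrt (x*y) := by
  have hx0 : 0 ≤ x := le_of_lt (lt_of_lt_of_le he hx)
  have hy0 : 0 ≤ y := le_of_lt (lt_of_lt_of_le he hy)
  have hu : Real.sqrt x ^ 2 = x := Real.sq_sqrt hx0
  have hv : Real.sqrt y ^ 2 = y := Real.sq_sqrt hy0
  have hue : Real.sqrt e ≤ Real.sqrt x := Real.sqrt_le_sqrt hx
  have hve : Real.sqrt e ≤ Real.sqrt y := Real.sqrt_le_sqrt hy
  have hee : Real.sqrt e ^ 2 = e := Real.sq_sqrt he.le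
  have he2 : 0 < Real.sqrt e := Real.sqrt_pos.2 he
  rw [Real.sqrt_mul hx0]
  set u := Real.sqrt x
  set v := Real.sqrt y
  -- (u-v)^2 * (u+v)^2 = (x-y)^2 and (u+v)^2 ≥ 4e
  have h1 : (u-v)^2 * (u+v)^2 = (x-y)^2 := by nlinarith [hu, hv]
  have h2 : 4*e ≤ (u+v)^2 := by nlinarith [hue, hve, hee]
  have h3 : (u-v)^2 * (4*e) ≤ (x-y)^2 := by nlinarith [sq_nonneg (u-v)]
  -- 2uv = x + y - (u-v)^2
  have h4 : 2*(u*v) = x + y - (u-v)^2 := by nlinarith [hu, hv]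
  refine le_of_mul_le_mul_right ?_ (show (0:ℝ) < 8*e by positivity)
  have hc : ((x+y)/2 - (x-y)^2/(8*e))*(8*e) = 4*e*(x+y) - (x-y)^2 := by
    field_simp
    ring
  rw [hc]
  nlinarith [h3, h4, he]

lemma one_sub_ge_exp {x : ℝ} (h0 : 0 ≤ x) (h2 : x ≤ 1/2) :
    Real.exp (-(2*x)) ≤ 1 - x := by
  have h := Real.add_one_le_exp (2*x)
  have hpos : (0:ℝ) < Real.exp (2*x) := Real.exp_pos _
  rw [Real.exp_neg, inv_eq_one_div, div_le_iff₀ hpos]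
  nlinarith

section Aux
variable {Ω : Type*} [MeasurableSpace Ω]

set_option maxHeartbeats 2000000 in
theorem main_aux
    (a b : ℝ) (ha : 0 ≤ a) (hab : a < b) (hb : b ≤ 1)
    (μ : Measure Ω) [IsProbabilityMeasure μ]
    (phat : (n : ℕ) → (Fin n → Bool) → Ω → ℝ)
    (hmeas : ∀ (n : ℕ) (s : Fin n → Bool), Measurable (phat n s))
    (hrange : ∀ (n : ℕ) (s : Fin n → Bool) (ω : Ω), phat n s ω ∈ Set.Icc (0 : ℝ) 1)
    (hcon : ∀ p ∈ Set.Ioo a b, Tendsto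
        (fun n : ℕ => (n : ℝ) *
          ∑ s : Fin n → Bool,
            (∏ i, if s i then p else 1 - p) * ∫ ω, (phat n s ω - p) ^ 2 ∂μ)
        atTop (𝓝 0)) : False := by
  -- choose inner interval
  set c : ℝ := (3*a+b)/4 with hc
  set d : ℝ := (a+3*b)/4 with hd
  have hac : a < c := by rw [hc]; linarith
  have hcd : c < d := by rw [hc, hd]; linarith
  have hdb : d < b := by rw [hd]; linarith
  have hc0 : 0 < c := by rw [hc]; linarith
  have hd1 : d < 1 := by rw [hd]; linarith
  obtain ⟨K, hK⟩ : ∃ K : ℝ, K = 1/(8*c) + 1/(8*(1-d)) := ⟨_, rfl⟩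
  have hK0 : 0 < K := by
    rw [hK]
    exact add_pos (one_div_pos.2 (by linarith)) (one_div_pos.2 (by linarith))
  set ε : ℝ := Real.exp (-(4*K)) / 16 with hε
  have hε0 : 0 < ε := by positivity
  set f : ℕ → ℝ → ℝ := fun n p => (n : ℝ) *
      ∑ s : Fin n → Bool,
        (∏ i, if s i then p else 1 - p) * ∫ ω, (phat n s ω - p) ^ 2 ∂μ with hf
  -- integral expansion and continuity
  have hint1 : ∀ n s, Integrable (phat n s) μ := by
    intro n s
    refine ⟨(hmeas n s).aestronglyMeasurable, ?_⟩
    refine HasFiniteIntegral.of_bounded (C := 1) (Filter.Eventually.of_forall fun ω => ?_)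
    have h1 := (hrange n s ω).1; have h2 := (hrange n s ω).2
    rw [Real.norm_eq_abs, abs_of_nonneg h1]; exact h2
  have hint2 : ∀ n s, Integrable (fun ω => (phat n s ω)^2) μ := by
    intro n s
    refine ⟨((hmeas n s).pow_const 2).aestronglyMeasurable, ?_⟩
    refine HasFiniteIntegral.of_bounded (C := 1) (Filter.Eventually.of_forall fun ω => ?_)
    have h1 := (hrange n s ω).1; have h2 := (hrange n s ω).2
    rw [Real.norm_eq_abs, abs_of_nonneg (sq_nonneg _)]; nlinarith
  have hexp : ∀ n s (p : ℝ), ∫ ω, (phat n s ω - p)^2 ∂μ =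
      (∫ ω, (phat n s ω)^2 ∂μ) - 2*p*(∫ ω, phat n s ω ∂μ) + p^2 := by
    intro n s p
    have heq : (fun ω => (phat n s ω - p)^2) =
        fun ω => ((phat n s ω)^2 - (2*p)*(phat n s ω)) + p^2 := by
      funext ω; ring
    have hadd : ∫ ω, (((phat n s ω)^2 - 2*p*phat n s ω) + p^2) ∂μ =
        (∫ ω, ((phat n s ω)^2 - 2*p*phat n s ω) ∂μ) + ∫ _ω, p^2 ∂μ :=
      integral_add ((hint2 n s).sub ((hint1 n s).const_mul _)) (integrable_const _)
    have hsub : ∫ ω, ((phat n s ω)^2 - 2*p*phat n s ω) ∂μ =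
        (∫ ω, (phat n s ω)^2 ∂μ) - ∫ ω, 2*p*(phat n s ω) ∂μ :=
      integral_sub (hint2 n s) ((hint1 n s).const_mul _)
    have hcm : ∫ ω, 2*p*(phat n s ω) ∂μ = 2*p*∫ ω, phat n s ω ∂μ := by
      rw [integral_const_mul]
    have heq2 : (fun ω => (phat n s ω - p)^2) =
        fun ω => (((phat n s ω)^2 - 2*p*phat n s ω) + p^2) := by funext ω; ring
    rw [heq2, hadd, hsub, hcm, integral_const]
    simp
  have hfc : ∀ n, Continuous (f n) := by
    intro n
    have hfeq : f n = fun p => (n:ℝ) * ∑ s : Fin n → Bool,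
        (∏ i, if s i then p else 1 - p) *
          ((∫ ω, (phat n s ω)^2 ∂μ) - 2*p*(∫ ω, phat n s ω ∂μ) + p^2) := by
      funext p
      rw [hf]
      simp only
      congr 1
      exact Finset.sum_congr rfl fun s _ => by rw [hexp n s p]
    rw [hfeq]
    refine continuous_const.mul (continuous_finset_sum _ fun s _ => Continuous.mul ?_ (by fun_prop))
    exact continuous_finset_prod _ fun i _ => by
      by_cases h : s i <;> simp [h] <;> fun_prop
  -- the sets
  set A : ℕ → Set ℝ := fun N => {p | p ∈ Set.Icc c d ∧ ∀ n, N ≤ n → f n p ≤ ε} with hA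
  have hAmeas : ∀ N, MeasurableSet (A N) := by
    intro N
    have : A N = Set.Icc c d ∩ ⋂ (n : ℕ), ⋂ (_ : N ≤ n), {p | f n p ≤ ε} := by
      ext p; simp [hA, Set.mem_iInter]
    rw [this]
    exact measurableSet_Icc.inter (MeasurableSet.iInter fun n => MeasurableSet.iInter fun _ =>
      measurableSet_le (hfc n).measurable measurable_const)
  have hAmono : Monotone A := by
    intro i j hij p hp
    exact ⟨hp.1, fun n hn => hp.2 n (le_trans hij hn)⟩
  have hAsub : ∀ N, A N ⊆ Set.Icc c d := fun N p hp => hp.1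
  have hAunion : ⋃ N, A N = Set.Icc c d := by
    apply Set.Subset.antisymm
    · exact Set.iUnion_subset hAsub
    · intro p hp
      have hpio : p ∈ Set.Ioo a b := ⟨lt_of_lt_of_le hac hp.1, lt_of_le_of_lt hp.2 hdb⟩
      have := (hcon p hpio).eventually (gt_mem_nhds hε0)
      obtain ⟨N, hN⟩ := eventually_atTop.1 this
      exact Set.mem_iUnion.2 ⟨N, hp, fun n hn => (hN n hn).le⟩
  -- measure continuity
  have hvol := tendsto_measure_iUnion_atTop (μ := volume) hAmono
  rw [hAunion, Real.volume_Icc] at hvol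
  have hlt : ENNReal.ofReal ((3/4)*(d-c)) < ENNReal.ofReal (d - c) := by
    rw [ENNReal.ofReal_lt_ofReal_iff (by linarith)]; linarith
  obtain ⟨N, hN⟩ := (hvol.eventually (lt_mem_nhds hlt)).exists
  -- choose n
  obtain ⟨n₁, hn₁⟩ := exists_nat_ge (max (2*K) (4/(d-c)^2))
  set n : ℕ := max n₁ (max N 1) with hn
  have hnN : N ≤ n := le_trans (le_max_left _ _) (le_max_right _ _)
  have hn1 : 1 ≤ n := le_trans (le_max_right _ _) (le_max_right _ _)
  have hnpos : (0:ℝ) < n := by exact_mod_cast hn1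
  have hnK : 2*K ≤ (n:ℝ) := le_trans (le_trans (le_max_left _ _) hn₁) (by exact_mod_cast le_max_left n₁ _)
  have hnL : 4/(d-c)^2 ≤ (n:ℝ) := le_trans (le_trans (le_max_right _ _) hn₁) (by exact_mod_cast le_max_left n₁ _)
  -- δ
  set δ : ℝ := Real.sqrt (1/(n:ℝ)) with hδ
  have hδ2 : δ^2 = 1/(n:ℝ) := Real.sq_sqrt (le_of_lt (one_div_pos.2 hnpos))
  have hδpos : 0 < δ := Real.sqrt_pos.2 (one_div_pos.2 hnpos)
  have hδle : δ ≤ (d-c)/2 := by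
    have h1 : (1:ℝ)/(n:ℝ) ≤ ((d-c)/2)^2 := by
      rw [div_le_iff₀ hnpos]
      have h2 : 4 ≤ (n:ℝ) * (d-c)^2 := by
        rw [div_le_iff₀ (pow_pos (show (0:ℝ) < d - c by linarith only [hcd]) 2)] at hnL
        linarith only [hnL]
      have : ((d-c)/2)^2 * (n:ℝ) = ((n:ℝ) * (d-c)^2)/4 := by ring
      rw [this]
      linarith only [h2]
    calc δ ≤ Real.sqrt (((d-c)/2)^2) := Real.sqrt_le_sqrt h1
    _ = (d-c)/2 := Real.sqrt_sq (by linarith only [hcd])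
  -- pigeonhole
  set B : Set ℝ := (fun x => x + δ) ⁻¹' (A N) with hB
  have hBmeas : MeasurableSet B := (measurable_id.add_const δ) (hAmeas N)
  have hBvol : volume B = volume (A N) := measure_preimage_add_right volume δ (A N)
  have hne : (A N ∩ B).Nonempty := by
    rw [Set.nonempty_iff_ne_empty]
    intro hemp
    have hU : volume (A N ∪ B) + volume (A N ∩ B) = volume (A N) + volume B :=
      measure_union_add_inter (A N) hBmeas
    rw [hemp, measure_empty, add_zero, hBvol] at hU
    have hUsub : A N ∪ B ⊆ Set.Icc (c - δ) d := by
      rintro x (hx | hx)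
      · have hmem : x ∈ Set.Icc c d := hAsub N hx
        rw [Set.mem_Icc] at hmem
        exact Set.mem_Icc.2 ⟨by linarith only [hmem.1, hδpos], hmem.2⟩
      · have hmem : x + δ ∈ Set.Icc c d := hAsub N hx
        rw [Set.mem_Icc] at hmem
        exact Set.mem_Icc.2 ⟨by linarith only [hmem.1, hδpos], by linarith only [hmem.2, hδpos]⟩
    have hUle : volume (A N ∪ B) ≤ ENNReal.ofReal (d - (c - δ)) := by
      calc volume (A N ∪ B) ≤ volume (Set.Icc (c - δ) d) := measure_mono hUsub
      _ = ENNReal.ofReal (d - (c - δ)) := Real.volume_Icc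
    have h2 : ENNReal.ofReal ((3/4)*(d-c)) + ENNReal.ofReal ((3/4)*(d-c))
        < volume (A N) + volume (A N) := ENNReal.add_lt_add hN hN
    rw [← ENNReal.ofReal_add (by linarith only [hcd]) (by linarith only [hcd]), ← hU] at h2
    have h3 : ENNReal.ofReal ((3/4)*(d-c) + (3/4)*(d-c)) < ENNReal.ofReal (d - (c - δ)) :=
      lt_of_lt_of_le h2 hUle
    rw [ENNReal.ofReal_lt_ofReal_iff (by linarith only [hcd, hδpos])] at h3
    linarith only [h3, hδle, hcd]
  obtain ⟨x, hxA, hxB⟩ := hne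
  set p : ℝ := x with hp
  set q : ℝ := x + δ with hq
  have hqA : q ∈ A N := hxB
  have hpc : c ≤ p := hxA.1.1
  have hpd : p ≤ d := hxA.1.2
  have hqc : c ≤ q := hqA.1.1
  have hqd : q ≤ d := hqA.1.2
  have hp0 : 0 ≤ p := by linarith only [hpc, hc0]
  have hp1 : p ≤ 1 := by linarith only [hpd, hd1]
  have hq0 : 0 ≤ q := by linarith only [hqc, hc0]
  have hq1 : q ≤ 1 := by linarith only [hqd, hd1]
  -- risk bound
  have hmain := risk_lb n μ (phat n) (hmeas n) (hrange n) p q hp0 hp1 hq0 hq1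
  -- rho lower bound
  set ρ : ℝ := Real.sqrt (p*q) + Real.sqrt ((1-p)*(1-q)) with hρ
  have hρ1 : 1 - K * δ^2 ≤ ρ := by
    have h1 := sqrt_mul_ge hc0 hpc hqc
    have h2 := sqrt_mul_ge (show (0:ℝ) < 1 - d by linarith only [hd1])
      (show 1 - d ≤ 1 - p by linarith only [hpd]) (show 1 - d ≤ 1 - q by linarith only [hqd])
    have hd1' : ((1-p) - (1-q))^2 = (p - q)^2 := by ring
    rw [hd1'] at h2
    have hδq : (p - q)^2 = δ^2 := by rw [hq]; ring
    rw [hδq] at h1 h2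
    have : 1 - K * δ^2 = ((p+q)/2 - δ^2/(8*c)) + (((1-p)+(1-q))/2 - δ^2/(8*(1-d))) := by
      rw [hK]; ring
    rw [this, hρ]
    exact add_le_add h1 h2
  have hexpρ : Real.exp (-(2*(K/(n:ℝ)))) ≤ ρ := by
    have hx1 : (0:ℝ) ≤ K/(n:ℝ) := le_of_lt (div_pos hK0 hnpos)
    have hx2 : K/(n:ℝ) ≤ 1/2 := by rw [div_le_iff₀ hnpos]; linarith only [hnK]
    refine le_trans (one_sub_ge_exp hx1 hx2) ?_
    · rw [hδ2] at hρ1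
      calc 1 - K/(n:ℝ) = 1 - K * (1/(n:ℝ)) := by ring
      _ ≤ ρ := hρ1
  have hρ0 : 0 ≤ ρ := le_trans (Real.exp_nonneg _) hexpρ
  have hpow : Real.exp (-(4*K)) ≤ (ρ^n)^2 := by
    have h1 : Real.exp (-(2*(K/(n:ℝ))))^n ≤ ρ^n :=
      pow_le_pow_left₀ (Real.exp_nonneg _) hexpρ n
    have h2 : Real.exp (-(2*(K/(n:ℝ))))^n = Real.exp (-(2*K)) := by
      rw [← Real.exp_nat_mul]
      congr 1
      field_simp
    rw [h2] at h1
    have h3 : Real.exp (-(2*K))^2 = Real.exp (-(4*K)) := by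
      rw [← Real.exp_nat_mul]; congr 1; ring
    calc Real.exp (-(4*K)) = (Real.exp (-(2*K)))^2 := h3.symm
    _ ≤ (ρ^n)^2 := pow_le_pow_left₀ (Real.exp_nonneg _) h1 2
  -- combine
  have hfp : f n p ≤ ε := hxA.2 n hnN
  have hfq : f n q ≤ ε := hqA.2 n hnN
  have hRp : ∑ s : Fin n → Bool, (∏ i, if s i then p else 1-p) * ∫ ω, (phat n s ω - p)^2 ∂μ
      ≤ ε / (n:ℝ) := by
    rw [le_div_iff₀ hnpos]
    rw [hf] at hfp
    simp only at hfp
    linarith only [hfp]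
  have hRq : ∑ s : Fin n → Bool, (∏ i, if s i then q else 1-q) * ∫ ω, (phat n s ω - q)^2 ∂μ
      ≤ ε / (n:ℝ) := by
    rw [le_div_iff₀ hnpos]
    rw [hf] at hfq
    simp only at hfq
    linarith only [hfq]
  have hqp : (q - p)^2 = δ^2 := by rw [hq]; ring
  have hLHS : Real.exp (-(4*K)) * (1/(4*(n:ℝ))) ≤ (ρ^n)^2 * ((q-p)^2/4) := by
    rw [hqp, hδ2]
    have : (1:ℝ)/(n:ℝ)/4 = 1/(4*(n:ℝ)) := by rw [div_div, mul_comm]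
    rw [this]
    exact mul_le_mul_of_nonneg_right hpow (by positivity)
  have hfinal : Real.exp (-(4*K)) * (1/(4*(n:ℝ))) ≤ 2 * (ε / (n:ℝ)) := by
    calc Real.exp (-(4*K)) * (1/(4*(n:ℝ))) ≤ (ρ^n)^2 * ((q-p)^2/4) := hLHS
    _ ≤ _ := hmain
    _ ≤ ε/(n:ℝ) + ε/(n:ℝ) := add_le_add hRp hRq
    _ = 2 * (ε / (n:ℝ)) := by ring
  have hE : 0 < Real.exp (-(4*K)) := Real.exp_pos _
  rw [hε] at hfinal
  have : Real.exp (-(4*K)) / (4*(n:ℝ)) ≤ Real.exp (-(4*K)) / (8*(n:ℝ)) := by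
    calc Real.exp (-(4*K)) / (4*(n:ℝ)) = Real.exp (-(4*K)) * (1/(4*(n:ℝ))) := by ring
    _ ≤ 2 * (Real.exp (-(4*K))/16 / (n:ℝ)) := hfinal
    _ = Real.exp (-(4*K)) / (8*(n:ℝ)) := by ring
  have h8 : (0:ℝ) < 8*(n:ℝ) := by positivity
  rw [div_le_div_iff₀ (by positivity) h8] at this
  linarith only [this, mul_pos hE hnpos]
end Aux

/-- Strong (fixed-parameter) lower bound for estimating a Bernoulli mean:
for any sequence of (possibly randomized, via the auxiliary probability space
`(Ω, μ)`) estimators `p̂ₙ : {0,1}ⁿ → [0,1]`, there is some `p` in the given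
interval `(a,b) ⊆ [0,1]` at which the mean squared error is not `o(1/n)`.
Here `E[(p̂ₙ(B₁,…,Bₙ) − p)²]` is written out explicitly as a sum over the
`2ⁿ` possible samples, weighted by their `Bernoulli(p)ⁿ` probabilities, of the
expectation over the (independent) internal randomness. -/
theorem bernoulli_estimation_strong_lower_bound
    (a b : ℝ) (ha : 0 ≤ a) (hab : a < b) (hb : b ≤ 1)
    {Ω : Type*} [MeasurableSpace Ω] (μ : Measure Ω) [IsProbabilityMeasure μ]
    (phat : (n : ℕ) → (Fin n → Bool) → Ω → ℝ)
    (hmeas : ∀ (n : ℕ) (s : Fin n → Bool), Measurable (phat n s))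
    (hrange : ∀ (n : ℕ) (s : Fin n → Bool) (ω : Ω), phat n s ω ∈ Set.Icc (0 : ℝ) 1) :
    ∃ p ∈ Set.Ioo a b,
      ¬ Tendsto
        (fun n : ℕ => (n : ℝ) *
          ∑ s : Fin n → Bool,
            (∏ i, if s i then p else 1 - p) * ∫ ω, (phat n s ω - p) ^ 2 ∂μ)
        atTop (𝓝 0) := by
  by_contra hcon
  push_neg at hcon
  refine main_aux a b ha hab hb μ phat hmeas hrange ?_
  intro p hp
  by_contra hne
  exact hne ((not_not.mp fun h2 => hne (absurd (hcon p hp) h2)))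
end
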